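/- arXiv:2507.12709 — 3 statements merged into one kernel-verified Lean document; each statement's English description precedes it below -/
import Mathlib

section
/- Let p : ℝ → ℝ be differentiable on (0,∞) with p(λ) > 0 for all λ > 0, and suppose p satisfies the first-order stationary flux equation (α₀ − β₁·λ)·p(λ) = 4ηD · d/dλ(λ·p(λ)) for all λ > 0. Then there exists a constant C > 0 such that p(λ) = C · λ^{α₀/(4ηD) − 1} · exp(−(β₁/(4ηD))·λ) for all λ > 0. -/
/-!
Expanding `(x p)' = p + x p'` turns the flux equation into `p'/p = (a - 1)/x - b` with
`a = α₀/(4ηD)` and `b = β₁/(4ηD)`. The Gamma density `x^(a-1) e^(-bx)` has the same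
logarithmic derivative, and two positive functions with equal logarithmic derivatives on the
connected open set `(0, ∞)` are proportional.
-/

open Set Real

theorem exists_pos_eqOn_const_mul_of_logDeriv_eqOn {f g : ℝ → ℝ} {s : Set ℝ}
    (hs : IsOpen s) (hs' : IsPreconnected s) (hf : DifferentiableOn ℝ f s)
    (hg : DifferentiableOn ℝ g s) (hf₀ : ∀ x ∈ s, 0 < f x) (hg₀ : ∀ x ∈ s, 0 < g x)
    (hfg : EqOn (logDeriv f) (logDeriv g) s) :
    ∃ C : ℝ, 0 < C ∧ ∀ x ∈ s, f x = C * g x := by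
  obtain ⟨C, -, hC⟩ := (logDeriv_eqOn_iff hf hg hs hs' (fun x hx ↦ (hg₀ x hx).ne')
    (fun x hx ↦ (hf₀ x hx).ne')).mp hfg
  rcases s.eq_empty_or_nonempty with rfl | ⟨t, ht⟩
  · exact ⟨1, one_pos, by simp⟩
  · refine ⟨C, ?_, fun x hx ↦ hC hx⟩
    have hCt : f t = C * g t := hC ht
    exact pos_of_mul_pos_left (hCt ▸ hf₀ t ht) (hg₀ t ht).le

theorem logDeriv_rpow_mul_exp {c b x : ℝ} (hx : 0 < x) :
    logDeriv (fun y ↦ y ^ c * exp (-b * y)) x = c / x - b := by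
  have hexp : HasDerivAt (fun y ↦ exp (-b * y)) (exp (-b * x) * -b) x := by
    simpa using ((hasDerivAt_id x).const_mul (-b)).exp
  have hderiv := (hasDerivAt_rpow_const (p := c) (Or.inl hx.ne')).fun_mul hexp
  rw [logDeriv_apply, hderiv.deriv, rpow_sub_one hx.ne']
  field_simp
  ring

theorem logDeriv_eq_of_stationary_flux {p : ℝ → ℝ} {α β k x : ℝ} (hk : k ≠ 0) (hx : x ≠ 0)
    (hp : DifferentiableAt ℝ p x) (hpx : p x ≠ 0)
    (hflux : (α - β * x) * p x = k * deriv (fun y ↦ y * p y) x) :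
    logDeriv p x = (α / k - 1) / x - β / k := by
  rw [deriv_fun_mul differentiableAt_fun_id hp, deriv_id''] at hflux
  rw [logDeriv_apply]
  field_simp
  linear_combination -hflux

theorem stationary_flux_solution_is_gamma_general
    (η D β₁ : ℝ) (hη : 0 < η) (hD : 0 < D)
    (α₀ : ℝ)
    (p : ℝ → ℝ)
    (hdiff : DifferentiableOn ℝ p (Set.Ioi (0 : ℝ)))
    (hpos : ∀ x : ℝ, 0 < x → 0 < p x)
    (hflux : ∀ x : ℝ, 0 < x →
      (α₀ - β₁ * x) * p x = 4 * η * D * deriv (fun y : ℝ => y * p y) x) :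
    ∃ C : ℝ, 0 < C ∧ ∀ x : ℝ, 0 < x →
      p x = C * x ^ (α₀ / (4 * η * D) - 1) * Real.exp (-(β₁ / (4 * η * D)) * x) := by
  have hk : 4 * η * D ≠ 0 := by positivity
  have hgamma : DifferentiableOn ℝ
      (fun y ↦ y ^ (α₀ / (4 * η * D) - 1) * exp (-(β₁ / (4 * η * D)) * y)) (Ioi 0) :=
    fun x hx ↦ by fun_prop (disch := exact (ne_of_gt hx))
  obtain ⟨C, hC, hpC⟩ := exists_pos_eqOn_const_mul_of_logDeriv_eqOn isOpen_Ioi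
    isPreconnected_Ioi hdiff hgamma hpos (fun x (hx : 0 < x) ↦ by positivity) fun x hx ↦ by
      rw [logDeriv_rpow_mul_exp hx, logDeriv_eq_of_stationary_flux hk hx.ne'
        (hdiff.differentiableAt (isOpen_Ioi.mem_nhds hx)) (hpos x hx).ne' (hflux x hx)]
  exact ⟨C, hC, fun x hx ↦ (hpC x hx).trans (mul_assoc _ _ _).symm⟩

/-- uniqueness part of Theorem 3.2.
If a positive, differentiable density `p` on `(0,∞)` satisfies the first-order
stationary flux equation `(α₀ − β₁ λ) p λ = 4ηD (λ p λ)'`, then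
`p λ = C λ^(α₀/(4ηD) − 1) exp(−(β₁/(4ηD)) λ)` for some constant `C > 0`. -/
theorem stationary_flux_solution_is_gamma
    (η D β₁ : ℝ) (hη : 0 < η) (hD : 0 < D) (hβ₁ : 0 < β₁)
    (m n : ℤ) (hmn : n ≤ m) (hn : 1 ≤ n)
    (α₀ : ℝ) (hα₀ : α₀ = η * D * ((m : ℝ) - (n : ℝ) + 3))
    (p : ℝ → ℝ)
    (hdiff : DifferentiableOn ℝ p (Set.Ioi (0 : ℝ)))
    (hpos : ∀ x : ℝ, 0 < x → 0 < p x)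
    (hflux : ∀ x : ℝ, 0 < x →
      (α₀ - β₁ * x) * p x = 4 * η * D * deriv (fun y : ℝ => y * p y) x) :
    ∃ C : ℝ, 0 < C ∧ ∀ x : ℝ, 0 < x →
      p x = C * x ^ (α₀ / (4 * η * D) - 1) * Real.exp (-(β₁ / (4 * η * D)) * x) :=
  stationary_flux_solution_is_gamma_general η D β₁ hη hD α₀ p hdiff hpos hflux
end

section
/- Define p : ℝ → ℝ by p(λ) = λ^{a−1}·exp(−b·λ) for λ > 0, where a := α₀/(4ηD) = (m−n+3)/4 and b := β₁/(4ηD). Then p is twice differentiable on (0,∞) and satisfies the stationary Fokker–Planck equation 0 = −d/dλ[(α₀ − β₁·λ)·p(λ)] + (1/2)·d²/dλ²[8ηD·λ·p(λ)] for all λ > 0. -/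
/-!
The probability current `J = -(α₀ - β₁ λ) p + ½ (8ηD λ p)'` of the Gamma density vanishes
identically on `(0, ∞)`: writing `c = 4ηD`, one has `α₀ = c a`, `β₁ = c b` and
`(λ p)' = (a - b λ) p`. The stationary Fokker–Planck equation is `J' = 0`.
-/

open Real Filter Topology

noncomputable def gammaKernel (a b x : ℝ) : ℝ := x ^ (a - 1) * exp (-b * x)

lemma contDiffAt_gammaKernel (a b : ℝ) {x : ℝ} (hx : 0 < x) {n : WithTop ℕ∞} :
    ContDiffAt ℝ n (gammaKernel a b) x :=
  (contDiffAt_rpow_const_of_ne hx.ne').mul (contDiffAt_const.mul contDiffAt_id).exp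

lemma hasDerivAt_gammaKernel (a b : ℝ) {x : ℝ} (hx : 0 < x) :
    HasDerivAt (gammaKernel a b) (((a - 1) / x - b) * gammaKernel a b x) x := by
  have hpow : HasDerivAt (fun y => y ^ (a - 1)) ((a - 1) * x ^ (a - 1 - 1)) x :=
    hasDerivAt_rpow_const (Or.inl hx.ne')
  have hexp : HasDerivAt (fun y => exp (-b * y)) (exp (-b * x) * -b) x :=
    ((hasDerivAt_id x).const_mul (-b)).exp.congr_deriv (by simp)
  refine (hpow.mul hexp).congr_deriv ?_
  rw [gammaKernel, rpow_sub_one hx.ne' (a - 1)]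
  field_simp
  ring

lemma hasDerivAt_mul_gammaKernel (a b : ℝ) {x : ℝ} (hx : 0 < x) :
    HasDerivAt (fun y => y * gammaKernel a b y) ((a - b * x) * gammaKernel a b x) x := by
  refine ((hasDerivAt_id x).mul (hasDerivAt_gammaKernel a b hx)).congr_deriv ?_
  simp only [id]
  field_simp
  ring

lemma neg_deriv_add_half_deriv_deriv_eq_zero {F G : ℝ → ℝ} {x : ℝ}
    (h : deriv G =ᶠ[𝓝 x] fun y => 2 * F y) :
    -deriv F x + 1 / 2 * deriv (deriv G) x = 0 := by
  rw [h.deriv_eq, deriv_const_mul_field']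
  ring

theorem gamma_density_solves_stationary_fokker_planck_general
    (η D β₁ : ℝ) (hη : 0 < η) (hD : 0 < D)
    (m n : ℤ)
    (α₀ : ℝ) (hα₀ : α₀ = η * D * ((m : ℝ) - (n : ℝ) + 3))
    (a b : ℝ) (ha : a = α₀ / (4 * η * D)) (hb : b = β₁ / (4 * η * D))
    (p : ℝ → ℝ) (hp : ∀ x : ℝ, p x = x ^ (a - 1) * Real.exp (-b * x)) :
    a = ((m : ℝ) - (n : ℝ) + 3) / 4 ∧
    (∀ x : ℝ, 0 < x → DifferentiableAt ℝ p x) ∧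
    (∀ x : ℝ, 0 < x → DifferentiableAt ℝ (deriv p) x) ∧
    (∀ x : ℝ, 0 < x →
      0 = -(deriv (fun y : ℝ => (α₀ - β₁ * y) * p y) x)
          + (1 / 2) * deriv (deriv (fun y : ℝ => 8 * η * D * y * p y)) x) := by
  obtain rfl : p = gammaKernel a b := funext hp
  have hc : 4 * η * D ≠ 0 := by positivity
  have hα₀a : α₀ = 4 * η * D * a := by rw [ha]; field_simp
  have hβ₁b : β₁ = 4 * η * D * b := by rw [hb]; field_simp
  have hflux : ∀ y, 0 < y → HasDerivAt (fun y => 8 * η * D * y * gammaKernel a b y)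
      (2 * ((α₀ - β₁ * y) * gammaKernel a b y)) y := fun y hy => by
    have h := (hasDerivAt_mul_gammaKernel a b hy).const_mul (8 * η * D)
    simp only [← mul_assoc] at h
    exact h.congr_deriv (by rw [hα₀a, hβ₁b]; ring)
  refine ⟨by rw [ha, hα₀]; field_simp,
    fun x hx => (hasDerivAt_gammaKernel a b hx).differentiableAt,
    fun x hx => ((contDiffAt_gammaKernel a b hx (n := 2)).derivWithin
      (m := 1) le_rfl).differentiableAt one_ne_zero,
    fun x hx => ?_⟩
  refine (neg_deriv_add_half_deriv_deriv_eq_zero ?_).symm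
  filter_upwards [Ioi_mem_nhds hx] with y hy using (hflux y hy).deriv

/-- existence part of Theorem 3.2.
The Gamma-type density `p λ = λ^(a−1) exp(−b λ)`, with `a = α₀/(4ηD) = (m−n+3)/4`
and `b = β₁/(4ηD)`, is twice differentiable on `(0,∞)` and solves the stationary
Fokker–Planck equation `0 = −d/dλ[(α₀ − β₁ λ) p λ] + (1/2) d²/dλ²[8ηD λ p λ]`. -/
theorem gamma_density_solves_stationary_fokker_planck
    (η D β₁ : ℝ) (hη : 0 < η) (hD : 0 < D) (hβ₁ : 0 < β₁)
    (m n : ℤ) (hmn : n ≤ m) (hn : 1 ≤ n)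
    (α₀ : ℝ) (hα₀ : α₀ = η * D * ((m : ℝ) - (n : ℝ) + 3))
    (a b : ℝ) (ha : a = α₀ / (4 * η * D)) (hb : b = β₁ / (4 * η * D))
    (p : ℝ → ℝ) (hp : ∀ x : ℝ, p x = x ^ (a - 1) * Real.exp (-b * x)) :
    a = ((m : ℝ) - (n : ℝ) + 3) / 4 ∧
    (∀ x : ℝ, 0 < x → DifferentiableAt ℝ p x) ∧
    (∀ x : ℝ, 0 < x → DifferentiableAt ℝ (deriv p) x) ∧
    (∀ x : ℝ, 0 < x →
      0 = -(deriv (fun y : ℝ => (α₀ - β₁ * y) * p y) x)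
          + (1 / 2) * deriv (deriv (fun y : ℝ => 8 * η * D * y * p y)) x) :=
  gamma_density_solves_stationary_fokker_planck_general η D β₁ hη hD m n α₀ hα₀ a b ha hb p hp
end

section
/- In the feedforward network setting, fix a layer x with 1 ≤ x ≤ X and let δ_x be the gradient of F_x at z_x = W_x·a_{x−1} + b_x. Then: (i) the map M ↦ F_x(M·a_{x−1} + b_x) on ℝ^{n_x × n_{x−1}} is differentiable at W_x and its gradient (with respect to the Frobenius inner product) is the rank-one matrix δ_x · a_{x−1}ᵀ; (ii) the map c ↦ F_x(W_x·a_{x−1} + c) on ℝ^{n_x} is differentiable at b_x with gradient δ_x. -/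
open Matrix

attribute [local instance] Matrix.frobeniusNormedAddCommGroup Matrix.frobeniusNormedSpace

/-!
Every `F x` is differentiable, by downward induction on `x` from `F X = ℓ ∘ (f ∘ ·)`, each
step composing with the differentiable layer map `z ↦ W (f ∘ z) + b`. The two gradients then
come from the chain rule at `z (y + 1)`: `M ↦ M a + b` is affine with linear part `H ↦ H a`, and
`c ↦ W a + c` is a translation; expanding a linear functional in the standard basis, whose
values are the `δ (y + 1) i`, gives the stated sums.
-/

section CoordinateFunctionals

variable {R : Type*} [CommSemiring R] [TopologicalSpace R] {m n : Type*} [Fintype m] [Fintype n]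

theorem ContinuousLinearMap.apply_eq_sum_apply_single_mul [DecidableEq n]
    (D : (n → R) →L[R] R) (c : n → R) : D c = ∑ i, D (Pi.single i 1) * c i := by
  conv_lhs => rw [← Finset.univ_sum_single c]
  simp only [map_sum]
  refine Finset.sum_congr rfl fun i _ => ?_
  rw [mul_comm, ← smul_eq_mul, ← D.map_smul, ← Pi.single_smul, smul_eq_mul, mul_one]

theorem ContinuousLinearMap.apply_mulVec_eq_sum [DecidableEq m]
    (D : (m → R) →L[R] R) (H : Matrix m n R) (v : n → R) :
    D (H *ᵥ v) = ∑ i, ∑ j, D (Pi.single i 1) * v j * H i j := by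
  rw [D.apply_eq_sum_apply_single_mul]
  simp only [mulVec, dotProduct, Finset.mul_sum]
  exact Finset.sum_congr rfl fun i _ => Finset.sum_congr rfl fun j _ => by ring

end CoordinateFunctionals

section Layer

variable {𝕜 : Type*} [NontriviallyNormedField 𝕜] [CompleteSpace 𝕜]
  {m n : Type*} [Fintype m] [Fintype n]

theorem differentiable_mulVec_comp_add {f : 𝕜 → 𝕜} (hf : Differentiable 𝕜 f)
    (W : Matrix m n 𝕜) (b : m → 𝕜) :
    Differentiable 𝕜 (fun v : n → 𝕜 => W *ᵥ (fun j => f (v j)) + b) :=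
  (W.mulVecLin.toContinuousLinearMap.differentiable.comp
    (differentiable_pi.mpr fun j => hf.comp (differentiable_apply j))).add_const b

theorem HasFDerivAt.comp_mulVec_add {G : Type*} [NormedAddCommGroup G] [NormedSpace 𝕜 G]
    {g : (m → 𝕜) → G} {D : (m → 𝕜) →L[𝕜] G} {W : Matrix m n 𝕜} {v : n → 𝕜}
    {b : m → 𝕜}
    (hg : HasFDerivAt g D (W *ᵥ v + b)) :
    HasFDerivAt (fun M : Matrix m n 𝕜 => g (M *ᵥ v + b))
      (D.comp ((mulVecBilin 𝕜 𝕜).flip v).toContinuousLinearMap) W :=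
  hg.comp W ((((mulVecBilin 𝕜 𝕜).flip v).toContinuousLinearMap).hasFDerivAt.add_const b)

end Layer

theorem differentiable_of_backward_recursion {𝕜 : Type*} [NontriviallyNormedField 𝕜]
    [CompleteSpace 𝕜] {ι : ℕ → Type*} [∀ x, Fintype (ι x)] {X : ℕ}
    {f : 𝕜 → 𝕜} (hf : Differentiable 𝕜 f) (W : (x : ℕ) → Matrix (ι (x + 1)) (ι x) 𝕜)
    (b : (x : ℕ) → ι (x + 1) → 𝕜) (F : (x : ℕ) → (ι x → 𝕜) → 𝕜)
    (hFX : Differentiable 𝕜 (F X))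
    (hFrec : ∀ x < X, F x = fun zv => F (x + 1) (W x *ᵥ (fun j => f (zv j)) + b x))
    {x : ℕ} (hx : x ≤ X) : Differentiable 𝕜 (F x) := by
  refine Nat.decreasingInduction (motive := fun x _ => Differentiable 𝕜 (F x))
    (fun k hk hnext => ?_) hFX hx
  rw [hFrec k hk]
  exact hnext.comp (differentiable_mulVec_comp_add hf _ _)

theorem backprop_gradient_formulas_general
    (X : ℕ)
    (d : ℕ → ℕ)
    (f : ℝ → ℝ) (hf : Differentiable ℝ f)
    (ℓ : (Fin (d X) → ℝ) → ℝ) (hℓ : Differentiable ℝ ℓ)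
    (W : (x : ℕ) → Matrix (Fin (d (x + 1))) (Fin (d x)) ℝ)
    (b : (x : ℕ) → Fin (d (x + 1)) → ℝ)
    (a z : (x : ℕ) → Fin (d x) → ℝ)
    (hz : ∀ x < X, z (x + 1) = (W x).mulVec (a x) + b x)
    (F : (x : ℕ) → (Fin (d x) → ℝ) → ℝ)
    (hFX : F X = fun zv => ℓ (fun i => f (zv i)))
    (hFrec : ∀ x < X, F x = fun zv => F (x + 1) ((W x).mulVec (fun j => f (zv j)) + b x))
    (δ : (x : ℕ) → Fin (d x) → ℝ)
    (hδ : ∀ x : ℕ, ∀ i : Fin (d x), δ x i = fderiv ℝ (F x) (z x) (Pi.single i 1))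
    (y : ℕ) (hy : y < X) :
    (∃ L : Matrix (Fin (d (y + 1))) (Fin (d y)) ℝ →L[ℝ] ℝ,
      (∀ H : Matrix (Fin (d (y + 1))) (Fin (d y)) ℝ,
        L H = ∑ i, ∑ j, δ (y + 1) i * a y j * H i j) ∧
      HasFDerivAt (fun M : Matrix (Fin (d (y + 1))) (Fin (d y)) ℝ =>
        F (y + 1) (M.mulVec (a y) + b y)) L (W y)) ∧
    (∃ Lb : (Fin (d (y + 1)) → ℝ) →L[ℝ] ℝ,
      (∀ c : Fin (d (y + 1)) → ℝ, Lb c = ∑ i, δ (y + 1) i * c i) ∧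
      HasFDerivAt (fun c : Fin (d (y + 1)) → ℝ =>
        F (y + 1) ((W y).mulVec (a y) + c)) Lb (b y)) := by
  have hFX_diff : Differentiable ℝ (F X) :=
    hFX ▸ hℓ.comp (differentiable_pi.mpr fun i => hf.comp (differentiable_apply i))
  have hF : Differentiable ℝ (F (y + 1)) :=
    differentiable_of_backward_recursion hf W b F hFX_diff hFrec hy
  set D := fderiv ℝ (F (y + 1)) (z (y + 1))
  have hD : HasFDerivAt (F (y + 1)) D (W y *ᵥ a y + b y) := hz y hy ▸ (hF _).hasFDerivAt
  have hDδ : ∀ i, D (Pi.single i 1) = δ (y + 1) i := fun i => (hδ (y + 1) i).symm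
  refine ⟨⟨_, fun H => ?_, hD.comp_mulVec_add⟩,
    ⟨D, fun c => ?_, (hasFDerivAt_comp_add_left _).mpr hD⟩⟩
  · simp only [ContinuousLinearMap.comp_apply, LinearMap.coe_toContinuousLinearMap',
      LinearMap.flip_apply, mulVecBilin_apply, D.apply_mulVec_eq_sum, hDδ]
  · simpa only [hDδ] using D.apply_eq_sum_apply_single_mul c

/-- Corollary 6.3, Gradient Formulas.
In the feedforward setting, for a layer `x = y + 1` (`1 ≤ x ≤ X`), the map
`M ↦ F_x (M a_{x−1} + b_x)` is differentiable at `W_x` with gradient (w.r.t. the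
Frobenius inner product) the rank-one matrix `δ_x a_{x−1}ᵀ`, i.e. with Fréchet
derivative `H ↦ Σᵢⱼ δ_{x,i} a_{x−1,j} H_{ij}`; and `c ↦ F_x (W_x a_{x−1} + c)` is
differentiable at `b_x` with gradient `δ_x`. -/
theorem backprop_gradient_formulas
    (X : ℕ) (hX : 1 ≤ X)
    (d : ℕ → ℕ)
    (f : ℝ → ℝ) (hf : Differentiable ℝ f)
    (ℓ : (Fin (d X) → ℝ) → ℝ) (hℓ : Differentiable ℝ ℓ)
    (W : (x : ℕ) → Matrix (Fin (d (x + 1))) (Fin (d x)) ℝ)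
    (b : (x : ℕ) → Fin (d (x + 1)) → ℝ)
    (a z : (x : ℕ) → Fin (d x) → ℝ)
    (hz : ∀ x < X, z (x + 1) = (W x).mulVec (a x) + b x)
    (ha : ∀ x < X, a (x + 1) = fun i => f (z (x + 1) i))
    (F : (x : ℕ) → (Fin (d x) → ℝ) → ℝ)
    (hFX : F X = fun zv => ℓ (fun i => f (zv i)))
    (hFrec : ∀ x < X, F x = fun zv => F (x + 1) ((W x).mulVec (fun j => f (zv j)) + b x))
    (δ : (x : ℕ) → Fin (d x) → ℝ)
    (hδ : ∀ x : ℕ, ∀ i : Fin (d x), δ x i = fderiv ℝ (F x) (z x) (Pi.single i 1))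
    (y : ℕ) (hy : y < X) :
    (∃ L : Matrix (Fin (d (y + 1))) (Fin (d y)) ℝ →L[ℝ] ℝ,
      (∀ H : Matrix (Fin (d (y + 1))) (Fin (d y)) ℝ,
        L H = ∑ i, ∑ j, δ (y + 1) i * a y j * H i j) ∧
      HasFDerivAt (fun M : Matrix (Fin (d (y + 1))) (Fin (d y)) ℝ =>
        F (y + 1) (M.mulVec (a y) + b y)) L (W y)) ∧
    (∃ Lb : (Fin (d (y + 1)) → ℝ) →L[ℝ] ℝ,
      (∀ c : Fin (d (y + 1)) → ℝ, Lb c = ∑ i, δ (y + 1) i * c i) ∧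
      HasFDerivAt (fun c : Fin (d (y + 1)) → ℝ =>
        F (y + 1) ((W y).mulVec (a y) + c)) Lb (b y)) :=
  backprop_gradient_formulas_general X d f hf ℓ hℓ W b a z hz F hFX hFrec δ hδ y hy
end
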